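/- arXiv:1706.10273 — 2 statements merged into one kernel-verified Lean document; each statement's English description precedes it below -/
import Mathlib

section
/- Let x_k, y_k, z_{kl} be reals in (0,1] for 1 <= k != l <= K, with min_k x_k > max_{k != l} z_{kl} and x_1/y_1 > max_{2<=k<=K} x_k/y_k. Define f(t_1,...,t_K) = [sum_k t_k*(t_k*x_k + sum_{l != k} t_l*z_{kl})] / [sum_k t_k*y_k] on the simplex {t_k >= 0, sum_k t_k = 1}. Then f(t_1,...,t_K) <= f(1,0,...,0) = x_1/y_1 for all t in the simplex. -/
/-!
On the simplex, the `k`-th summand of the numerator is `t k` times a convex combination of `x k`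
and the `z k l`, all at most `x k`, so the numerator is at most `∑ t k * x k`. Bounding each
`x k` by `(x 0 / y 0) * y k` then bounds this by `x 0 / y 0` times the denominator.
-/

open Finset

section Simplex

variable {ι : Type*} [Fintype ι] {t : ι → ℝ}

lemma sum_mul_pos_of_simplex {y : ι → ℝ} (ht : ∀ k, 0 ≤ t k) (hsum : ∑ k, t k = 1)
    (hy : ∀ k, 0 < y k) : 0 < ∑ k, t k * y k := by
  obtain ⟨k, -, hk⟩ : ∃ k ∈ univ, t k ≠ 0 := exists_ne_zero_of_sum_ne_zero (by simp [hsum])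
  exact sum_pos' (fun k _ => mul_nonneg (ht k) (hy k).le)
    ⟨k, mem_univ k, mul_pos ((ht k).lt_of_ne' hk) (hy k)⟩

lemma mul_add_sum_erase_mul_le [DecidableEq ι] {w : ι → ℝ} {c : ℝ} (k : ι)
    (ht : ∀ k, 0 ≤ t k) (hsum : ∑ k, t k = 1) (hw : ∀ l ≠ k, w l ≤ c) :
    t k * c + ∑ l ∈ univ.erase k, t l * w l ≤ c :=
  calc t k * c + ∑ l ∈ univ.erase k, t l * w l
      ≤ t k * c + ∑ l ∈ univ.erase k, t l * c := by
        gcongr with l hl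
        exacts [ht l, hw l (ne_of_mem_erase hl)]
    _ = c := by rw [← sum_mul, ← add_mul, add_sum_erase _ _ (mem_univ k), hsum, one_mul]

end Simplex

theorem stmt_4_general (K : ℕ) [NeZero K]
    (x y : Fin K → ℝ) (z : Fin K → Fin K → ℝ)
    (hy : ∀ k, 0 < y k ∧ y k ≤ 1)
    (hratio : ∀ k : Fin K, k ≠ 0 → x k / y k < x 0 / y 0)
    (hxz : ∀ k l m : Fin K, l ≠ m → z l m < x k)
    (f : (Fin K → ℝ) → ℝ)
    (hf : ∀ t, f t = (∑ k, t k * (t k * x k + ∑ l ∈ Finset.univ.erase k, t l * z k l))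
        / (∑ k, t k * y k)) :
    f (fun k => if k = 0 then 1 else 0) = x 0 / y 0
    ∧ ∀ t : Fin K → ℝ, (∀ k, 0 ≤ t k) → (∑ k, t k) = 1 →
        f t ≤ f (fun k => if k = 0 then 1 else 0) := by
  have hvertex : f (fun k => if k = 0 then 1 else 0) = x 0 / y 0 := by
    simp [hf, ite_mul, sum_ite_eq', mem_erase]
  refine ⟨hvertex, fun t ht hsum => ?_⟩
  have hxy : ∀ k, x k ≤ x 0 / y 0 * y k := fun k => by
    rcases eq_or_ne k 0 with rfl | hk
    · rw [div_mul_cancel₀ _ (hy 0).1.ne']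
    · exact ((div_le_iff₀ (hy k).1).mp (hratio k hk).le)
  rw [hf, hvertex, div_le_iff₀ (sum_mul_pos_of_simplex ht hsum fun k => (hy k).1), mul_sum]
  calc ∑ k, t k * (t k * x k + ∑ l ∈ univ.erase k, t l * z k l)
      ≤ ∑ k, t k * x k := sum_le_sum fun k _ => mul_le_mul_of_nonneg_left
        (mul_add_sum_erase_mul_le k ht hsum fun l hl => (hxz k k l hl.symm).le) (ht k)
    _ ≤ ∑ k, x 0 / y 0 * (t k * y k) := sum_le_sum fun k _ => by
        rw [mul_left_comm]; exact mul_le_mul_of_nonneg_left (hxy k) (ht k)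

/-- Lemma 5(1): under the stated conditions, `f(t₁,…,t_K) ≤ f(1,0,…,0) = x₁/y₁`
on the simplex. -/
theorem stmt_4 (K : ℕ) [NeZero K] (hK : 2 ≤ K)
    (x y : Fin K → ℝ) (z : Fin K → Fin K → ℝ)
    (hx : ∀ k, 0 < x k ∧ x k ≤ 1) (hy : ∀ k, 0 < y k ∧ y k ≤ 1)
    (hz : ∀ k l, k ≠ l → 0 < z k l ∧ z k l ≤ 1)
    (hratio : ∀ k : Fin K, k ≠ 0 → x k / y k < x 0 / y 0)
    (hxz : ∀ k l m : Fin K, l ≠ m → z l m < x k)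
    (f : (Fin K → ℝ) → ℝ)
    (hf : ∀ t, f t = (∑ k, t k * (t k * x k + ∑ l ∈ Finset.univ.erase k, t l * z k l))
        / (∑ k, t k * y k)) :
    f (fun k => if k = 0 then 1 else 0) = x 0 / y 0
    ∧ ∀ t : Fin K → ℝ, (∀ k, 0 ≤ t k) → (∑ k, t k) = 1 →
        f t ≤ f (fun k => if k = 0 then 1 else 0) :=
  stmt_4_general K x y z hy hratio hxz f hf
end

section
/- With the setup and assumptions of the previous statement, for any 0 < t < 1: f(1,0,...,0) - max over the simplex intersected with {t_1 <= 1-t} of f(t_1,...,t_K) >= (1/2) * t * (x_1/y_1 - max_{2<=k<=K} x_k/y_k). -/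
/-!
Write `r = x₀ / y₀`, `M = max_{k ≠ 0} x_k / y_k`, `D = ∑ s_k y_k` and `N` for the numerator of
`f`, so that `f(e₀) = r`. Since `z_{kl} ≤ x_k`, dropping every cross term except those in row `0`
gives `r D - N ≥ ∑_{k ≠ 0} s_k ((r y_k - x_k) + s₀ (x₀ - z_{0k}))`. Each bracket is at least
`(r - M) (y_k + s₀ y₀) / 2`: the first summand covers `y_k`, and when `y_k < y₀` the second covers
`y₀`, because then `(r - M) y₀ ≤ x₀ - x_k`. Summing, and using `∑_{k ≠ 0} s_k = 1 - s₀ ≥ t`,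
gives `r D - N ≥ t (r - M) D / 2`.
-/

open Finset

lemma ratio_gap_le {r M xi yi xk yk z s : ℝ} (hyi : 0 < yi) (hyk : 0 < yk) (hxk : 0 ≤ xk)
    (hxi : xi = r * yi) (hMr : M ≤ r) (hxM : xk ≤ M * yk) (hzk : z ≤ xk) (hzi : z ≤ xi)
    (hs0 : 0 ≤ s) (hs1 : s ≤ 1) :
    (r - M) * (yk + s * yi) ≤ 2 * ((r * yk - xk) + s * (xi - z)) := by
  have hM : 0 ≤ M := nonneg_of_mul_nonneg_left (hxk.trans hxM) hyk
  have hk : (r - M) * yk ≤ r * yk - xk := by linarith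
  have hk0 : 0 ≤ (r - M) * yk := mul_nonneg (sub_nonneg.2 hMr) hyk.le
  have hgap : 0 ≤ s * (xi - z) := mul_nonneg hs0 (sub_nonneg.2 hzi)
  rcases le_total yi yk with h | h
  · have : (r - M) * (s * yi) ≤ (r - M) * yk :=
      mul_le_mul_of_nonneg_left ((mul_le_of_le_one_left hyi.le hs1).trans h) (sub_nonneg.2 hMr)
    linarith
  · have hMy : M * yk ≤ M * yi := mul_le_mul_of_nonneg_left h hM
    have : s * ((r - M) * yi) ≤ s * (xi - z) := mul_le_mul_of_nonneg_left (by linarith) hs0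
    linarith

section

variable {ι : Type*} [Fintype ι]

lemma sum_mul_pos_of_sum_eq_one {s y : ι → ℝ} (hs : ∀ k, 0 ≤ s k) (hsum : ∑ k, s k = 1)
    (hy : ∀ k, 0 < y k) : 0 < ∑ k, s k * y k := by
  obtain ⟨k, -, hk⟩ := exists_lt_of_sum_lt (s := univ) (f := 0) (g := s) (by simp [hsum])
  exact sum_pos' (fun k _ => mul_nonneg (hs k) (hy k).le) ⟨k, mem_univ k, mul_pos hk (hy k)⟩

variable [DecidableEq ι]

def pairwiseNum (x : ι → ℝ) (z : ι → ι → ℝ) (s : ι → ℝ) : ℝ :=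
  ∑ k, s k * (s k * x k + ∑ l ∈ univ.erase k, s l * z k l)

lemma sum_mul_sub_pairwiseNum (x : ι → ℝ) (z : ι → ι → ℝ) {s : ι → ℝ} (hsum : ∑ k, s k = 1) :
    ∑ k, s k * x k - pairwiseNum x z s = ∑ k, s k * ∑ l ∈ univ.erase k, s l * (x k - z k l) := by
  rw [pairwiseNum, ← sum_sub_distrib]
  refine sum_congr rfl fun k _ => ?_
  have hk : s k + ∑ l ∈ univ.erase k, s l = 1 := by rw [add_sum_erase _ _ (mem_univ k), hsum]
  simp only [mul_sub, sum_sub_distrib, ← sum_mul]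
  linear_combination s k * x k * hk.symm

lemma mul_sum_sub_le_sum_mul_sub_pairwiseNum {x : ι → ℝ} {z : ι → ι → ℝ} {s : ι → ℝ}
    (hs : ∀ k, 0 ≤ s k) (hsum : ∑ k, s k = 1) (hzx : ∀ k l, k ≠ l → z k l ≤ x k) (i : ι) :
    s i * ∑ l ∈ univ.erase i, s l * (x i - z i l) ≤ ∑ k, s k * x k - pairwiseNum x z s := by
  rw [sum_mul_sub_pairwiseNum x z hsum]
  refine single_le_sum (f := fun k => s k * ∑ l ∈ univ.erase k, s l * (x k - z k l))
    (fun k _ => mul_nonneg (hs k) (sum_nonneg fun l hl => ?_)) (mem_univ i)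
  exact mul_nonneg (hs l) (sub_nonneg.2 (hzx k l (ne_of_mem_erase hl).symm))

lemma pairwiseNum_vertex (x : ι → ℝ) (z : ι → ι → ℝ) (i : ι) :
    pairwiseNum x z (fun k => if k = i then 1 else 0) = x i := by
  rw [pairwiseNum, sum_eq_single i (fun k _ hk => by simp [hk]) (by simp)]
  simp [sum_eq_zero fun l hl => if_neg (ne_of_mem_erase hl)]

lemma mul_sum_mul_le_sum_erase_mul {s y : ι → ℝ} (hs : ∀ k, 0 ≤ s k) (hsum : ∑ k, s k = 1)
    (hy : ∀ k, 0 ≤ y k) {i : ι} {t : ℝ} (hti : s i ≤ 1 - t) :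
    t * ∑ k, s k * y k ≤ ∑ k ∈ univ.erase i, s k * (y k + s i * y i) := by
  have hrest : ∑ k ∈ univ.erase i, s k = 1 - s i := by
    rw [← hsum, ← sum_erase_add _ _ (mem_univ i), add_sub_cancel_right]
  have hA : 0 ≤ ∑ k ∈ univ.erase i, s k * y k := sum_nonneg fun k _ => mul_nonneg (hs k) (hy k)
  simp only [mul_add, sum_add_distrib, ← sum_mul, hrest]
  rw [← sum_erase_add _ _ (mem_univ i)]
  nlinarith [mul_nonneg (hs i) (hy i), hs i]

lemma ratio_gap_mul_le_two_mul {x y s : ι → ℝ} {z : ι → ι → ℝ} {i : ι} {r M t : ℝ}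
    (hx : ∀ k, 0 ≤ x k) (hy : ∀ k, 0 < y k) (hxi : x i = r * y i) (hMr : M ≤ r)
    (hxM : ∀ k, k ≠ i → x k ≤ M * y k) (hzx : ∀ k l, k ≠ l → z k l ≤ x k)
    (hzi : ∀ k, k ≠ i → z i k ≤ x k) (hs : ∀ k, 0 ≤ s k) (hsum : ∑ k, s k = 1)
    (hti : s i ≤ 1 - t) :
    (r - M) * t * ∑ k, s k * y k ≤ 2 * (r * ∑ k, s k * y k - pairwiseNum x z s) := by
  have hsi1 : s i ≤ 1 := by
    rw [← hsum]; exact single_le_sum (fun k _ => hs k) (mem_univ i)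
  have hvertex : ∑ k ∈ univ.erase i, s k * (r * y k - x k) = r * ∑ k, s k * y k - ∑ k, s k * x k := by
    rw [sum_erase _ (by rw [hxi, sub_self, mul_zero]), mul_sum, ← sum_sub_distrib]
    exact sum_congr rfl fun k _ => by ring
  calc (r - M) * t * ∑ k, s k * y k
      ≤ (r - M) * ∑ k ∈ univ.erase i, s k * (y k + s i * y i) := by
        rw [mul_assoc]
        exact mul_le_mul_of_nonneg_left
          (mul_sum_mul_le_sum_erase_mul hs hsum (fun k => (hy k).le) hti) (sub_nonneg.2 hMr)
    _ = ∑ k ∈ univ.erase i, s k * ((r - M) * (y k + s i * y i)) := by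
        rw [mul_sum]; exact sum_congr rfl fun k _ => by ring
    _ ≤ ∑ k ∈ univ.erase i, s k * (2 * ((r * y k - x k) + s i * (x i - z i k))) := by
        refine sum_le_sum fun k hk => mul_le_mul_of_nonneg_left ?_ (hs k)
        have hki := ne_of_mem_erase hk
        exact ratio_gap_le (hy i) (hy k) (hx k) hxi hMr (hxM k hki) (hzi k hki)
          (hzx i k hki.symm) (hs i) hsi1
    _ = 2 * (∑ k ∈ univ.erase i, s k * (r * y k - x k)
          + s i * ∑ k ∈ univ.erase i, s k * (x i - z i k)) := by
        rw [mul_sum, ← sum_add_distrib, mul_sum]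
        exact sum_congr rfl fun k _ => by ring
    _ ≤ 2 * (r * ∑ k, s k * y k - pairwiseNum x z s) := by
        have := mul_sum_sub_le_sum_mul_sub_pairwiseNum hs hsum hzx i
        rw [hvertex]; linarith

end

/-- Lemma 5(2): under the stated conditions, for any `0 < t < 1`,
`f(1,0,…,0) - max_{t₁ ≤ 1-t} f(t₁,…,t_K) ≥ (1/2) t (x₁/y₁ - max_{k≥2} x_k/y_k)`. -/
theorem stmt_5 (K : ℕ) [NeZero K] (hK : 2 ≤ K)
    (x y : Fin K → ℝ) (z : Fin K → Fin K → ℝ)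
    (hx : ∀ k, 0 < x k ∧ x k ≤ 1) (hy : ∀ k, 0 < y k ∧ y k ≤ 1)
    (hratio : ∀ k : Fin K, k ≠ 0 → x k / y k < x 0 / y 0)
    (hxz : ∀ k l m : Fin K, l ≠ m → z l m < x k)
    (f : (Fin K → ℝ) → ℝ)
    (hf : ∀ s, f s = (∑ k, s k * (s k * x k + ∑ l ∈ Finset.univ.erase k, s l * z k l))
        / (∑ k, s k * y k))
    (t : ℝ) :
    ∀ s : Fin K → ℝ, (∀ k, 0 ≤ s k) → (∑ k, s k) = 1 → s 0 ≤ 1 - t →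
      f (fun k => if k = 0 then 1 else 0) - f s
        ≥ (1 / 2) * t *
          (x 0 / y 0 -
            (Finset.univ.erase (0 : Fin K)).sup'
              ⟨⟨1, by omega⟩, by simp [Finset.mem_erase, Fin.ext_iff]⟩
              (fun k => x k / y k)) := by
  intro s hs hsum hs0
  set M := (univ.erase (0 : Fin K)).sup' ⟨⟨1, by omega⟩, by simp [mem_erase, Fin.ext_iff]⟩
    (fun k => x k / y k)
  have hMr : M ≤ x 0 / y 0 := sup'_le _ _ fun k hk => (hratio k (ne_of_mem_erase hk)).le
  have hxM (k : Fin K) (hk : k ≠ 0) : x k ≤ M * y k :=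
    (div_le_iff₀ (hy k).1).1 (le_sup' (fun k => x k / y k) (mem_erase.2 ⟨hk, mem_univ k⟩))
  have key := ratio_gap_mul_le_two_mul (fun k => (hx k).1.le) (fun k => (hy k).1)
    (div_mul_cancel₀ (x 0) (hy 0).1.ne').symm hMr hxM (fun k l hkl => (hxz k k l hkl).le)
    (fun k hk => (hxz k 0 k hk.symm).le) hs hsum hs0
  have hD := sum_mul_pos_of_sum_eq_one hs hsum fun k => (hy k).1
  have hfs : f s ≤ x 0 / y 0 - 1 / 2 * t * (x 0 / y 0 - M) := by
    rw [hf, div_le_iff₀ hD]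
    change pairwiseNum x z s ≤ _
    linarith
  have hvertex : f (fun k => if k = 0 then 1 else 0) = x 0 / y 0 := by
    rw [hf]
    change pairwiseNum x z _ / _ = _
    simp [pairwiseNum_vertex]
  rw [hvertex]
  linarith
end
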